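/- arXiv:2505.13368 — 3 statements merged into one kernel-verified Lean document; each statement's English description precedes it below -/
import Mathlib

section
/- In a 2-crossed module of groups (L → H → G), the map ▷: H × L → L defined by h ▷ ℓ := ℓ·{t(ℓ)⁻¹, h} is an action of H on L by automorphisms. -/
/-- A 2-crossed module of groups `L → H → G`. -/
structure TwoCrossedModule (L H G : Type*) [Group L] [Group H] [Group G] where
  /-- the map `t : L → H` -/
  tL : L →* H
  /-- the map `t : H → G` -/
  tH : H →* G
  t_comp : ∀ ℓ : L, tH (tL ℓ) = 1
  /-- the action of `G` on `H` by automorphisms -/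
  actH : G →* MulAut H
  /-- the action of `G` on `L` by automorphisms -/
  actL : G →* MulAut L
  tH_equiv : ∀ (g : G) (h : H), tH (actH g h) = g * tH h * g⁻¹
  tL_equiv : ∀ (g : G) (ℓ : L), tL (actL g ℓ) = actH g (tL ℓ)
  /-- the Peiffer lifting `{-,-} : H × H → L` -/
  pf : H → H → L
  pf_equiv : ∀ (g : G) (h₁ h₂ : H), actL g (pf h₁ h₂) = pf (actH g h₁) (actH g h₂)
  pf_peiffer : ∀ h₁ h₂ : H, tL (pf h₁ h₂) = h₁ * h₂ * h₁⁻¹ * actH (tH h₁) h₂⁻¹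
  pf_t_t : ∀ ℓ₁ ℓ₂ : L, pf (tL ℓ₁) (tL ℓ₂) = ℓ₁ * ℓ₂ * ℓ₁⁻¹ * ℓ₂⁻¹
  pf_mul_left : ∀ h₁ h₂ h₃ : H,
    pf (h₁ * h₂) h₃ = pf h₁ (h₂ * h₃ * h₂⁻¹) * actL (tH h₁) (pf h₂ h₃)
  pf_mul_right : ∀ h₁ h₂ h₃ : H,
    pf h₁ (h₂ * h₃) = pf h₁ h₂ * pf h₁ h₃ *
      pf (h₁ * h₃ * h₁⁻¹ * actH (tH h₁) h₃⁻¹)⁻¹ (actH (tH h₁) h₂)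
  pf_t_mix : ∀ (ℓ : L) (h : H),
    pf (tL ℓ) h * pf h (tL ℓ) = ℓ * actL (tH h) ℓ⁻¹

/-- The `H`-action on `L` induced by the Peiffer lifting: `h ▷ ℓ := ℓ·{t(ℓ)⁻¹, h}`. -/
def TwoCrossedModule.hAct {L H G : Type*} [Group L] [Group H] [Group G]
    (C : TwoCrossedModule L H G) (h : H) (ℓ : L) : L :=
  ℓ * C.pf (C.tL ℓ)⁻¹ h

namespace TwoCrossedModule

variable {L H G : Type*} [Group L] [Group H] [Group G] (C : TwoCrossedModule L H G)

lemma tH_tL_inv (ℓ : L) : C.tH (C.tL ℓ)⁻¹ = 1 := by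
  rw [map_inv, C.t_comp, inv_one]

lemma pf_one_left (h : H) : C.pf 1 h = 1 := by
  have := C.pf_mul_left 1 1 h
  simp only [one_mul, mul_one, inv_one, map_one, MulAut.one_apply] at this
  exact left_eq_mul.mp this

lemma pf_one_right (h : H) : C.pf h 1 = 1 := by
  have := C.pf_mul_right h 1 1
  simp only [one_mul, mul_one, inv_one, map_one, MulAut.one_apply, mul_inv_cancel,
    C.pf_one_left] at this
  exact left_eq_mul.mp this

/-- `t(pf (tℓ)⁻¹ h) = (tℓ)⁻¹ h (tℓ) h⁻¹`. -/
lemma tL_pf_tL_inv (ℓ : L) (h : H) :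
    C.tL (C.pf (C.tL ℓ)⁻¹ h) = (C.tL ℓ)⁻¹ * h * C.tL ℓ * h⁻¹ := by
  rw [C.pf_peiffer, C.tH_tL_inv, map_one, MulAut.one_apply, inv_inv]

/-- Key lemma: `hAct (tℓ' * h) ℓ = ℓ' * hAct h ℓ * ℓ'⁻¹`. -/
lemma hAct_tL_mul (ℓ' : L) (h : H) (ℓ : L) :
    C.hAct (C.tL ℓ' * h) ℓ = ℓ' * C.hAct h ℓ * ℓ'⁻¹ := by
  have expand := C.pf_mul_right (C.tL ℓ)⁻¹ (C.tL ℓ') h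
  rw [C.tH_tL_inv, map_one, MulAut.one_apply, MulAut.one_apply, inv_inv] at expand
  -- expand : pf (tℓ)⁻¹ (tℓ' * h) = pf (tℓ)⁻¹ (tℓ') * pf (tℓ)⁻¹ h *
  --   pf ((tℓ)⁻¹ * h * tℓ * h⁻¹)⁻¹ (tℓ')
  have e1 : C.pf (C.tL ℓ)⁻¹ (C.tL ℓ') = ℓ⁻¹ * ℓ' * ℓ * ℓ'⁻¹ := by
    rw [← map_inv C.tL, C.pf_t_t, inv_inv]
  set c := C.pf (C.tL ℓ)⁻¹ h with hc
  have e3 : C.pf ((C.tL ℓ)⁻¹ * h * C.tL ℓ * h⁻¹)⁻¹ (C.tL ℓ') = c⁻¹ * ℓ' * c * ℓ'⁻¹ := by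
    rw [← C.tL_pf_tL_inv, ← hc, ← map_inv C.tL, C.pf_t_t, inv_inv]
  unfold hAct
  rw [expand, e1, e3, ← hc]
  group

lemma hAct_mul (h₁ h₂ : H) (ℓ : L) :
    C.hAct (h₁ * h₂) ℓ = C.hAct h₁ (C.hAct h₂ ℓ) := by
  set a := C.pf (C.tL ℓ)⁻¹ h₁ with ha
  set c := C.pf (C.tL ℓ)⁻¹ h₂ with hc
  have expand := C.pf_mul_right (C.tL ℓ)⁻¹ h₁ h₂
  rw [C.tH_tL_inv, map_one, MulAut.one_apply, MulAut.one_apply, inv_inv] at expand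
  have harg : (C.tL ℓ)⁻¹ * h₂ * C.tL ℓ * h₂⁻¹ = C.tL c := (C.tL_pf_tL_inv ℓ h₂).symm
  rw [harg] at expand
  -- LHS = ℓ * (a * c * pf (tL c)⁻¹ h₁)
  -- RHS : hAct h₁ (ℓ * c)
  have key : C.hAct h₁ (ℓ * c) = ℓ * (a * c * C.pf (C.tL c)⁻¹ h₁) := by
    have e2 : C.pf (C.tL (ℓ * c))⁻¹ h₁
        = C.pf (C.tL c)⁻¹ ((C.tL ℓ)⁻¹ * h₁ * C.tL ℓ) * a := by
      have := C.pf_mul_left (C.tL c)⁻¹ (C.tL ℓ)⁻¹ h₁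
      rw [C.tH_tL_inv, map_one, MulAut.one_apply] at this
      rw [map_mul, mul_inv_rev, this, inv_inv, ← ha]
    have e4 : (C.tL ℓ)⁻¹ * h₁ * C.tL ℓ = C.tL a * h₁ := by
      rw [← ha] at *
      rw [C.tL_pf_tL_inv]; group
    have e5 : c * C.pf (C.tL c)⁻¹ (C.tL a * h₁) = a * (c * C.pf (C.tL c)⁻¹ h₁) * a⁻¹ := by
      have := C.hAct_tL_mul a h₁ c
      unfold hAct at this
      exact this
    unfold hAct
    rw [e2, e4, ← mul_assoc, mul_assoc ℓ c _, e5]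
    group
  show ℓ * C.pf (C.tL ℓ)⁻¹ (h₁ * h₂) = C.hAct h₁ (ℓ * c)
  rw [key, expand]

lemma hAct_one (ℓ : L) : C.hAct 1 ℓ = ℓ := by
  unfold hAct; rw [C.pf_one_right, mul_one]

lemma hAct_one' (h : H) : C.hAct h 1 = 1 := by
  unfold hAct; rw [map_one, inv_one, C.pf_one_left, mul_one]

lemma hAct_mul' (h : H) (ℓ₁ ℓ₂ : L) :
    C.hAct h (ℓ₁ * ℓ₂) = C.hAct h ℓ₁ * C.hAct h ℓ₂ := by
  set m := C.pf (C.tL ℓ₁)⁻¹ h with hm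
  have expand := C.pf_mul_left (C.tL ℓ₂)⁻¹ (C.tL ℓ₁)⁻¹ h
  rw [C.tH_tL_inv, map_one, MulAut.one_apply, inv_inv, ← hm] at expand
  have e4 : (C.tL ℓ₁)⁻¹ * h * C.tL ℓ₁ = C.tL m * h := by
    rw [hm, C.tL_pf_tL_inv]; group
  have e5 : ℓ₂ * C.pf (C.tL ℓ₂)⁻¹ (C.tL m * h) = m * (ℓ₂ * C.pf (C.tL ℓ₂)⁻¹ h) * m⁻¹ := by
    have := C.hAct_tL_mul m h ℓ₂
    unfold hAct at this
    exact this
  show ℓ₁ * ℓ₂ * C.pf (C.tL (ℓ₁ * ℓ₂))⁻¹ h = (ℓ₁ * m) * (ℓ₂ * C.pf (C.tL ℓ₂)⁻¹ h)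
  rw [map_mul, mul_inv_rev, expand, e4, ← mul_assoc, mul_assoc ℓ₁ ℓ₂ _, e5]
  group

lemma hAct_bijective (h : H) : Function.Bijective (C.hAct h) := by
  apply Function.bijective_iff_has_inverse.mpr
  refine ⟨C.hAct h⁻¹, fun ℓ => ?_, fun ℓ => ?_⟩
  · rw [← C.hAct_mul, inv_mul_cancel, C.hAct_one]
  · rw [← C.hAct_mul, mul_inv_cancel, C.hAct_one]

end TwoCrossedModule

/-- The map `h ▷ ℓ := ℓ·{t(ℓ)⁻¹, h}` is an action of `H` on `L` by automorphisms. -/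
theorem hAct_is_action_by_automorphisms {L H G : Type*} [Group L] [Group H] [Group G]
    (C : TwoCrossedModule L H G) :
    (∀ ℓ : L, C.hAct 1 ℓ = ℓ) ∧
    (∀ (h₁ h₂ : H) (ℓ : L), C.hAct (h₁ * h₂) ℓ = C.hAct h₁ (C.hAct h₂ ℓ)) ∧
    (∀ h : H, C.hAct h 1 = 1) ∧
    (∀ (h : H) (ℓ₁ ℓ₂ : L), C.hAct h (ℓ₁ * ℓ₂) = C.hAct h ℓ₁ * C.hAct h ℓ₂) ∧
    (∀ h : H, Function.Bijective (C.hAct h)) :=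
  ⟨C.hAct_one, C.hAct_mul, C.hAct_one', C.hAct_mul', C.hAct_bijective⟩
end

section
/- In a 2-crossed module of groups, for all h₁, h₂ ∈ H: t(h₁) ▷ h₂ = h₁ · t(h₁⁻¹ ▷ {h₁,h₂}⁻¹) · h₂ · h₁⁻¹, where h⁻¹▷ℓ denotes the H-action on L defined via the Peiffer lifting. -/
/-- In a 2-crossed module of groups,
`t(h₁) ▷ h₂ = h₁ · t(h₁⁻¹ ▷ {h₁,h₂}⁻¹) · h₂ · h₁⁻¹`, where the inner `▷` is the
`H`-action on `L` defined via the Peiffer lifting. -/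
theorem actH_tH_eq {L H G : Type*} [Group L] [Group H] [Group G]
    (C : TwoCrossedModule L H G) (h₁ h₂ : H) :
    C.actH (C.tH h₁) h₂ = h₁ * C.tL (C.hAct h₁⁻¹ (C.pf h₁ h₂)⁻¹) * h₂ * h₁⁻¹ := by
  have h0 : C.tH (C.tL (C.pf h₁ h₂)) = 1 := C.t_comp _
  have h1 : C.tL (C.hAct h₁⁻¹ (C.pf h₁ h₂)⁻¹) = h₁⁻¹ * (C.tL (C.pf h₁ h₂))⁻¹ * h₁ := by
    rw [TwoCrossedModule.hAct, map_mul, map_inv, inv_inv, C.pf_peiffer (C.tL (C.pf h₁ h₂)) h₁⁻¹, h0]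
    simp
    group
  rw [h1, C.pf_peiffer]
  simp
  group
end

section
/- In a 2-crossed module of Lie algebras (𝔩 → 𝔥 → 𝔤), the bilinear map ▷: 𝔥 × 𝔩 → 𝔩 defined by Y ▷ Z := −{t(Z), Y} is an action of 𝔥 on 𝔩 by derivations, and with this action (𝔩 →t 𝔥) is a crossed module of Lie algebras; in particular t(Y ▷ Z) = [Y, t(Z)] and t(Z₁) ▷ Z₂ = [Z₁, Z₂]. -/
/-- A 2-crossed module of (real) Lie algebras `𝔩 → 𝔥 → 𝔤`. -/
structure TwoCrossedModuleLie (𝔩 𝔥 𝔤 : Type*)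
    [LieRing 𝔩] [LieAlgebra ℝ 𝔩] [LieRing 𝔥] [LieAlgebra ℝ 𝔥]
    [LieRing 𝔤] [LieAlgebra ℝ 𝔤] where
  /-- the map `t : 𝔩 → 𝔥` -/
  tL : 𝔩 →ₗ⁅ℝ⁆ 𝔥
  /-- the map `t : 𝔥 → 𝔤` -/
  tH : 𝔥 →ₗ⁅ℝ⁆ 𝔤
  t_comp : ∀ Z : 𝔩, tH (tL Z) = 0
  /-- the action of `𝔤` on `𝔥` -/
  actH : 𝔤 →ₗ[ℝ] 𝔥 →ₗ[ℝ] 𝔥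
  /-- the action of `𝔤` on `𝔩` -/
  actL : 𝔤 →ₗ[ℝ] 𝔩 →ₗ[ℝ] 𝔩
  actH_lie : ∀ (X₁ X₂ : 𝔤) (Y : 𝔥),
    actH ⁅X₁, X₂⁆ Y = actH X₁ (actH X₂ Y) - actH X₂ (actH X₁ Y)
  actH_der : ∀ (X : 𝔤) (Y₁ Y₂ : 𝔥),
    actH X ⁅Y₁, Y₂⁆ = ⁅actH X Y₁, Y₂⁆ + ⁅Y₁, actH X Y₂⁆
  actL_lie : ∀ (X₁ X₂ : 𝔤) (Z : 𝔩),
    actL ⁅X₁, X₂⁆ Z = actL X₁ (actL X₂ Z) - actL X₂ (actL X₁ Z)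
  actL_der : ∀ (X : 𝔤) (Z₁ Z₂ : 𝔩),
    actL X ⁅Z₁, Z₂⁆ = ⁅actL X Z₁, Z₂⁆ + ⁅Z₁, actL X Z₂⁆
  tH_equiv : ∀ (X : 𝔤) (Y : 𝔥), tH (actH X Y) = ⁅X, tH Y⁆
  tL_equiv : ∀ (X : 𝔤) (Z : 𝔩), tL (actL X Z) = actH X (tL Z)
  /-- the Peiffer lifting `{-,-} : 𝔥 × 𝔥 → 𝔩` -/
  pf : 𝔥 →ₗ[ℝ] 𝔥 →ₗ[ℝ] 𝔩
  pf_equiv : ∀ (X : 𝔤) (Y₁ Y₂ : 𝔥),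
    actL X (pf Y₁ Y₂) = pf (actH X Y₁) Y₂ + pf Y₁ (actH X Y₂)
  pf_peiffer : ∀ Y₁ Y₂ : 𝔥, tL (pf Y₁ Y₂) = ⁅Y₁, Y₂⁆ - actH (tH Y₁) Y₂
  pf_t_t : ∀ Z₁ Z₂ : 𝔩, pf (tL Z₁) (tL Z₂) = ⁅Z₁, Z₂⁆
  pf_bracket_left : ∀ Y₁ Y₂ Y₃ : 𝔥, pf ⁅Y₁, Y₂⁆ Y₃ =
    actL (tH Y₁) (pf Y₂ Y₃) + pf Y₁ ⁅Y₂, Y₃⁆ -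
      actL (tH Y₂) (pf Y₁ Y₃) - pf Y₂ ⁅Y₁, Y₃⁆
  pf_bracket_right : ∀ Y₁ Y₂ Y₃ : 𝔥,
    pf Y₁ ⁅Y₂, Y₃⁆ = pf (tL (pf Y₁ Y₂)) Y₃ - pf (tL (pf Y₁ Y₃)) Y₂
  pf_t_mix : ∀ (Z : 𝔩) (Y : 𝔥), pf (tL Z) Y + pf Y (tL Z) = - actL (tH Y) Z

/-- The induced `𝔥`-action on `𝔩`: `Y ▷ Z := −{t(Z), Y}`. -/
def TwoCrossedModuleLie.hAct {𝔩 𝔥 𝔤 : Type*}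
    [LieRing 𝔩] [LieAlgebra ℝ 𝔩] [LieRing 𝔥] [LieAlgebra ℝ 𝔥]
    [LieRing 𝔤] [LieAlgebra ℝ 𝔤] (C : TwoCrossedModuleLie 𝔩 𝔥 𝔤)
    (Y : 𝔥) (Z : 𝔩) : 𝔩 :=
  - C.pf (C.tL Z) Y

/-- In a 2-crossed module of Lie algebras, `Y ▷ Z := −{t(Z), Y}` is an action of `𝔥`
on `𝔩` by derivations, and with this action `(𝔩 → 𝔥)` is a crossed module of Lie
algebras; in particular `t(Y ▷ Z) = [Y, t(Z)]` and `t(Z₁) ▷ Z₂ = [Z₁, Z₂]`. -/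
theorem hAct_lie_crossed_module {𝔩 𝔥 𝔤 : Type*}
    [LieRing 𝔩] [LieAlgebra ℝ 𝔩] [LieRing 𝔥] [LieAlgebra ℝ 𝔥]
    [LieRing 𝔤] [LieAlgebra ℝ 𝔤] (C : TwoCrossedModuleLie 𝔩 𝔥 𝔤) :
    (∀ (Y : 𝔥) (Z₁ Z₂ : 𝔩), C.hAct Y ⁅Z₁, Z₂⁆ = ⁅C.hAct Y Z₁, Z₂⁆ + ⁅Z₁, C.hAct Y Z₂⁆) ∧
    (∀ (Y₁ Y₂ : 𝔥) (Z : 𝔩),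
      C.hAct ⁅Y₁, Y₂⁆ Z = C.hAct Y₁ (C.hAct Y₂ Z) - C.hAct Y₂ (C.hAct Y₁ Z)) ∧
    (∀ (Y : 𝔥) (Z : 𝔩), C.tL (C.hAct Y Z) = ⁅Y, C.tL Z⁆) ∧
    (∀ Z₁ Z₂ : 𝔩, C.hAct (C.tL Z₁) Z₂ = ⁅Z₁, Z₂⁆) := by
  -- if `tH Y = 0` then `pf (tL Z) Y = - pf Y (tL Z)` (from `pf_t_mix`)
  have hmix : ∀ (Z : 𝔩) (Y : 𝔥), C.tH Y = 0 →
      C.pf (C.tL Z) Y = - C.pf Y (C.tL Z) := by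
    intro Z Y h
    have hm := C.pf_t_mix Z Y
    rw [h] at hm
    simp only [map_zero, LinearMap.zero_apply, neg_zero] at hm
    exact eq_neg_of_add_eq_zero_left hm
  have hcomp : ∀ W : 𝔩, C.tH (C.tL W) = 0 := C.t_comp
  have htLneg : ∀ W : 𝔩, C.tL (-W) = -C.tL W := fun W =>
    LinearMap.map_neg C.tL.toLinearMap W
  refine ⟨?_, ?_, ?_, ?_⟩
  · -- derivation property
    intro Y Z₁ Z₂
    set P := C.pf (C.tL ⁅Z₁, Z₂⁆) Y with hPdef
    set A := C.pf (C.tL (C.pf (C.tL Z₁) Y)) (C.tL Z₂) with hAdef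
    set B := C.pf (C.tL (C.pf (C.tL Z₂) Y)) (C.tL Z₁) with hBdef
    have e1 : P = C.pf (C.tL Z₁) ⁅C.tL Z₂, Y⁆ - C.pf (C.tL Z₂) ⁅C.tL Z₁, Y⁆ := by
      rw [hPdef, LieHom.map_lie, C.pf_bracket_left, hcomp, hcomp]
      simp only [map_zero, LinearMap.zero_apply]
      abel
    have e2 : C.pf (C.tL Z₁) ⁅C.tL Z₂, Y⁆ = P - A := by
      rw [C.pf_bracket_right, C.pf_t_t]
    have e3 : C.pf (C.tL Z₂) ⁅C.tL Z₁, Y⁆ = -P - B := by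
      have hsk : (⁅Z₂, Z₁⁆ : 𝔩) = -⁅Z₁, Z₂⁆ := by rw [← lie_skew]
      rw [C.pf_bracket_right, C.pf_t_t, hsk, htLneg, map_neg, LinearMap.neg_apply]
    have hE : P = P + P - A + B := by
      conv_lhs => rw [e1]
      rw [e2, e3]; abel
    have hP : P = A - B := by
      apply add_right_cancel (b := P - A + B)
      calc P + (P - A + B) = P + P - A + B := by abel
        _ = P := hE.symm
        _ = A - B + (P - A + B) := by abel
    have g1 : ⁅C.hAct Y Z₁, Z₂⁆ = -A := by
      show ⁅-C.pf (C.tL Z₁) Y, Z₂⁆ = -A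
      rw [neg_lie, ← C.pf_t_t, hAdef]
    have g2 : ⁅Z₁, C.hAct Y Z₂⁆ = B := by
      show ⁅Z₁, -C.pf (C.tL Z₂) Y⁆ = B
      rw [lie_neg, ← C.pf_t_t, hmix _ _ (hcomp _), hBdef, neg_neg]
    show -P = ⁅C.hAct Y Z₁, Z₂⁆ + ⁅Z₁, C.hAct Y Z₂⁆
    rw [g1, g2, hP]; abel
  · -- action property
    intro Y₁ Y₂ Z
    show -C.pf (C.tL Z) ⁅Y₁, Y₂⁆ =
      -C.pf (C.tL (-C.pf (C.tL Z) Y₂)) Y₁ - -C.pf (C.tL (-C.pf (C.tL Z) Y₁)) Y₂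
    rw [C.pf_bracket_right, htLneg, htLneg, map_neg, map_neg,
      LinearMap.neg_apply, LinearMap.neg_apply]
    abel
  · -- equivariance
    intro Y Z
    show C.tL (-C.pf (C.tL Z) Y) = ⁅Y, C.tL Z⁆
    rw [htLneg, C.pf_peiffer, hcomp]
    simp only [map_zero, LinearMap.zero_apply, sub_zero]
    rw [← lie_skew, neg_neg]
  · -- Peiffer
    intro Z₁ Z₂
    show -C.pf (C.tL Z₂) (C.tL Z₁) = ⁅Z₁, Z₂⁆
    rw [C.pf_t_t, ← lie_skew, neg_neg]
end
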